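/- Let C be a closed convex subset of a normed space containing 0, and suppose a family of linear maps Φ_s (s in a finite index set) each maps C into C. Then any convex combination Σ_s p_s Φ_s (p_s ≥ 0, Σ p_s = 1) maps C into C, and consequently for a generator ℒ = Σ_s γ_s (Φ_s − 𝟙) with γ_s ≥ 0, exp(tℒ) maps C into C for all t ≥ 0. -/

import Mathlib

/-!
The operators mapping `C` into itself form a monoid `S` whose carrier is closed and convex.
Writing `ℒ = Γ • (B - 1)` with `Γ = ∑ γ_s` and `B ∈ S` a convex combination of the `Φ_s`,
`exp (t ℒ) = ∑ₖ e^{-tΓ} (tΓ)^k / k! • B^k` is a convex combination, with Poisson weights,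
of the powers `B^k ∈ S`, and so lies in `S`.
-/

open Filter Topology Set

theorem Convex.mem_of_hasSum {ι E : Type*} [AddCommGroup E] [Module ℝ E] [TopologicalSpace E]
    [IsTopologicalAddGroup E] [ContinuousSMul ℝ E] {s : Set E} (hs : Convex ℝ s)
    (hs_closed : IsClosed s) {w : ι → ℝ} {z : ι → E} {x : E} (hw₀ : ∀ i, 0 ≤ w i)
    (hw₁ : HasSum w 1) (hz : ∀ i, z i ∈ s) (hx : HasSum (fun i ↦ w i • z i) x) : x ∈ s := by
  have hlim : Tendsto (fun t : Finset ι ↦ t.centerMass w z) atTop (𝓝 x) := by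
    simpa [Finset.centerMass] using (hw₁.inv₀ one_ne_zero).smul hx
  refine hs_closed.mem_of_tendsto hlim ?_
  filter_upwards [hw₁.eventually (lt_mem_nhds zero_lt_one)] with t ht
  exact hs.centerMass_mem (fun i _ ↦ hw₀ i) ht (fun i _ ↦ hz i)

theorem Convex.exists_sum_smul_sub_eq_smul_sub {ι E : Type*} [AddCommGroup E] [Module ℝ E]
    {s : Set E} (hs : Convex ℝ s) {a : E} (ha : a ∈ s) (t : Finset ι) {w : ι → ℝ}
    {z : ι → E} (hw₀ : ∀ i ∈ t, 0 ≤ w i) (hz : ∀ i ∈ t, z i ∈ s) :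
    ∃ b ∈ s, ∑ i ∈ t, w i • (z i - a) = (∑ i ∈ t, w i) • (b - a) := by
  rcases (Finset.sum_nonneg hw₀).eq_or_lt with hw | hw
  · refine ⟨a, ha, ?_⟩
    rw [← hw, zero_smul]
    exact Finset.sum_eq_zero fun i hi ↦ by
      rw [(Finset.sum_eq_zero_iff_of_nonneg hw₀).1 hw.symm i hi, zero_smul]
  · refine ⟨t.centerMass w z, hs.centerMass_mem hw₀ hw hz, ?_⟩
    simp only [Finset.centerMass, smul_sub, smul_smul, mul_inv_cancel₀ hw.ne', one_smul,
      Finset.sum_sub_distrib, Finset.sum_smul]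

namespace ContinuousLinearMap

variable {E : Type*} [NormedAddCommGroup E] [NormedSpace ℝ E]

def mapsToSubmonoid (s : Set E) : Submonoid (E →L[ℝ] E) where
  carrier := {T | MapsTo T s s}
  one_mem' := mapsTo_id s
  mul_mem' hT hU := hT.comp hU

theorem isClosed_mapsToSubmonoid {s : Set E} (hs : IsClosed s) :
    IsClosed (mapsToSubmonoid s : Set (E →L[ℝ] E)) := by
  simp only [mapsToSubmonoid, Submonoid.coe_set_mk, Subsemigroup.coe_set_mk, MapsTo,
    ofPred_forall]
  exact isClosed_biInter fun x _ ↦ hs.preimage (continuous_eval_const x)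

theorem convex_mapsToSubmonoid {s : Set E} (hs : Convex ℝ s) :
    Convex ℝ (mapsToSubmonoid s : Set (E →L[ℝ] E)) := by
  intro T hT U hU a b ha hb hab x hx
  exact hs (hT hx) (hU hx) ha hb hab

end ContinuousLinearMap

theorem NormedSpace.exp_smul_sub_one_mem {𝔸 : Type*} [NormedRing 𝔸] [NormedAlgebra ℝ 𝔸]
    [CompleteSpace 𝔸] (S : Submonoid 𝔸) (hS_convex : Convex ℝ (S : Set 𝔸))
    (hS_closed : IsClosed (S : Set 𝔸)) {B : 𝔸} (hB : B ∈ S) {c : ℝ} (hc : 0 ≤ c) :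
    NormedSpace.exp (c • (B - 1)) ∈ S := by
  -- `exp_add_of_commute` is stated for normed `ℚ`-algebras
  let _ : NormedAlgebra ℚ 𝔸 := NormedAlgebra.restrictScalars ℚ ℝ 𝔸
  have hsplit : NormedSpace.exp (c • (B - 1)) = Real.exp (-c) • NormedSpace.exp (c • B) := by
    rw [smul_sub, sub_eq_add_neg, ← neg_smul, ← Algebra.algebraMap_eq_smul_one,
      NormedSpace.exp_add_of_commute (Algebra.commutes _ _).symm,
      ← NormedSpace.algebraMap_exp_comm, ← Real.exp_eq_exp_ℝ, Algebra.algebraMap_eq_smul_one,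
      mul_smul_one]
  have hweights : HasSum (fun n : ℕ ↦ Real.exp (-c) * (c ^ n / n.factorial)) 1 := by
    simpa [← Real.exp_eq_exp_ℝ, ← Real.exp_add] using
      (NormedSpace.expSeries_div_hasSum_exp c).mul_left (Real.exp (-c))
  refine Convex.mem_of_hasSum hS_convex hS_closed (fun n ↦ by positivity) hweights
    (fun n ↦ pow_mem hB n) ?_
  have hterms : (fun n : ℕ ↦ (Real.exp (-c) * (c ^ n / n.factorial)) • B ^ n) =
      fun n ↦ Real.exp (-c) • ((n.factorial : ℝ)⁻¹ • (c • B) ^ n) := by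
    funext n
    rw [smul_pow, smul_smul, smul_smul, div_eq_inv_mul, mul_assoc]
  rw [hsplit, hterms]
  exact (NormedSpace.exp_series_hasSum_exp' (c • B)).const_smul _

theorem stmt16_general {V : Type*} [NormedAddCommGroup V] [NormedSpace ℝ V] [FiniteDimensional ℝ V]
    {m : ℕ} (C : Set V) (hCc : IsClosed C) (hCconv : Convex ℝ C)
    (Φ : Fin m → V →L[ℝ] V) (hΦ : ∀ s, ∀ x ∈ C, Φ s x ∈ C) :
    (∀ p : Fin m → ℝ, (∀ s, 0 ≤ p s) → ∑ s, p s = 1 →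
      ∀ x ∈ C, (∑ s, p s • Φ s) x ∈ C) ∧
    (∀ γ : Fin m → ℝ, (∀ s, 0 ≤ γ s) →
      ∀ L : V →L[ℝ] V, L = ∑ s, γ s • (Φ s - ContinuousLinearMap.id ℝ V) →
      ∀ t : ℝ, 0 ≤ t → ∀ x ∈ C, NormedSpace.exp (t • L) x ∈ C) := by
  set S := ContinuousLinearMap.mapsToSubmonoid C
  have hS_convex : Convex ℝ (S : Set (V →L[ℝ] V)) :=
    ContinuousLinearMap.convex_mapsToSubmonoid hCconv
  have hΦS : ∀ s ∈ Finset.univ, Φ s ∈ S := fun s _ ↦ hΦ s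
  refine ⟨fun p hp hp₁ ↦ hS_convex.sum_mem (fun s _ ↦ hp s) hp₁ hΦS, ?_⟩
  rintro γ hγ L rfl t ht
  obtain ⟨B, hB, hL⟩ :=
    hS_convex.exists_sum_smul_sub_eq_smul_sub S.one_mem Finset.univ (fun s _ ↦ hγ s) hΦS
  rw [← ContinuousLinearMap.one_def, hL, smul_smul]
  exact NormedSpace.exp_smul_sub_one_mem S hS_convex
    (ContinuousLinearMap.isClosed_mapsToSubmonoid hCc) hB
    (mul_nonneg ht (Finset.sum_nonneg fun s _ ↦ hγ s))

/-- If each linear map `Φ_s` preserves a closed convex set `C ∋ 0`, then any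
convex combination `Σ_s p_s Φ_s` preserves `C`, and for `ℒ = Σ_s γ_s (Φ_s − 𝟙)` with
`γ_s ≥ 0`, `exp(tℒ)` preserves `C` for all `t ≥ 0`. -/
theorem stmt16 {V : Type*} [NormedAddCommGroup V] [NormedSpace ℝ V] [FiniteDimensional ℝ V]
    {m : ℕ} (C : Set V) (hCc : IsClosed C) (hCconv : Convex ℝ C) (hC0 : (0 : V) ∈ C)
    (Φ : Fin m → V →L[ℝ] V) (hΦ : ∀ s, ∀ x ∈ C, Φ s x ∈ C) :
    (∀ p : Fin m → ℝ, (∀ s, 0 ≤ p s) → ∑ s, p s = 1 →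
      ∀ x ∈ C, (∑ s, p s • Φ s) x ∈ C) ∧
    (∀ γ : Fin m → ℝ, (∀ s, 0 ≤ γ s) →
      ∀ L : V →L[ℝ] V, L = ∑ s, γ s • (Φ s - ContinuousLinearMap.id ℝ V) →
      ∀ t : ℝ, 0 ≤ t → ∀ x ∈ C, NormedSpace.exp (t • L) x ∈ C) :=
  stmt16_general C hCc hCconv Φ hΦ
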